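/- arXiv:1402.2156 — 2 statements merged into one kernel-verified Lean document; each statement's English description precedes it below -/
import Mathlib

section
/- For every natural number n and every real x: |x|ⁿ · e^{−((√3 − 1)/2)·x²} ≤ √(2ⁿ · n!). -/
/-- Uniform bound used for the eigenfunctions of the Gaussian covariance
operator: `|x|ⁿ e^{-((√3-1)/2) x²} ≤ √(2ⁿ n!)`. -/
theorem stmt10 (n : ℕ) (x : ℝ) :
    |x| ^ n * Real.exp (-((Real.sqrt 3 - 1) / 2) * x ^ 2) ≤
      Real.sqrt (2 ^ n * n.factorial) := by
  have h3 : (3:ℝ)/2 ≤ Real.sqrt 3 := by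
    rw [show (3:ℝ)/2 = Real.sqrt ((3/2)^2) from (Real.sqrt_sq (by norm_num)).symm]
    exact Real.sqrt_le_sqrt (by norm_num)
  set c : ℝ := Real.sqrt 3 - 1 with hc
  have hc1 : 1/2 ≤ c := by simp only [hc]; linarith
  have hy : 0 ≤ c * x ^ 2 := mul_nonneg (by linarith) (sq_nonneg x)
  have key : (c * x ^ 2) ^ n / n.factorial ≤ Real.exp (c * x ^ 2) :=
    Real.pow_div_factorial_le_exp _ hy n
  have hfac : (0:ℝ) < n.factorial := by positivity
  have hx2 : (x ^ 2) ^ n ≤ 2 ^ n * n.factorial * Real.exp (c * x ^ 2) := by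
    have h1 : (x ^ 2) ^ n ≤ (2 * (c * x ^ 2)) ^ n := by
      apply pow_le_pow_left₀ (sq_nonneg x)
      nlinarith [sq_nonneg x]
    have h2 : (2 * (c * x ^ 2)) ^ n = 2 ^ n * (c * x ^ 2) ^ n := mul_pow 2 _ n
    have h3' : (c * x ^ 2) ^ n ≤ n.factorial * Real.exp (c * x ^ 2) := by
      rw [div_le_iff₀ hfac] at key
      linarith [key]
    calc (x ^ 2) ^ n ≤ 2 ^ n * (c * x ^ 2) ^ n := by rw [← h2]; exact h1
      _ ≤ 2 ^ n * (n.factorial * Real.exp (c * x ^ 2)) := by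
          apply mul_le_mul_of_nonneg_left h3' (by positivity)
      _ = 2 ^ n * n.factorial * Real.exp (c * x ^ 2) := by ring
  have hLHS : 0 ≤ |x| ^ n * Real.exp (-(c / 2) * x ^ 2) := by positivity
  rw [show Real.sqrt (2 ^ n * n.factorial) = Real.sqrt ((2:ℝ) ^ n * n.factorial) by norm_num]
  rw [← Real.sqrt_sq hLHS]
  apply Real.sqrt_le_sqrt
  have hsq : (|x| ^ n * Real.exp (-(c / 2) * x ^ 2)) ^ 2
      = (x ^ 2) ^ n * Real.exp (-(c * x ^ 2)) := by
    rw [mul_pow, ← Real.exp_nat_mul]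
    congr 1
    · rw [← pow_mul, ← pow_mul, mul_comm n 2, pow_mul, pow_mul, sq_abs]
    · push_cast; ring
  rw [hsq, Real.exp_neg]
  calc (x ^ 2) ^ n * (Real.exp (c * x ^ 2))⁻¹
      ≤ (2 ^ n * n.factorial * Real.exp (c * x ^ 2)) * (Real.exp (c * x ^ 2))⁻¹ := by
        apply mul_le_mul_of_nonneg_right hx2 (by positivity)
    _ = 2 ^ n * n.factorial := by
        field_simp
end

section
/- Let (Ω, F, P) be a probability space and T > 0, μ ∈ ℝ. Let (λ_i)_{i∈ℕ} be nonnegative reals with S := Σ_i √λ_i < ∞, let (e_i)_{i∈ℕ} be functions e_i : ℝ → ℝ with |e_i(x)| ≤ C for all i and x (C ≥ 0), and let (β_i)_{i∈ℕ} be measurable real random variables with E(β_i²) = 1 for all i. Let X₀ : Ω → ℝ be measurable with E(X₀²) < ∞. Suppose X : Ω × [0,T] → ℝ is such that for P-almost every ω the path t ↦ X(ω,t) is continuous, for every t ∈ [0,T] the series Σ_i √λ_i β_i(ω) e_i(X(ω,s)) converges absolutely for a.e. s and X(ω,t) = X₀(ω) + μ t + ∫₀ᵗ Σ_i √λ_i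 β_i(ω) e_i(X(ω,s)) ds, and the map ω ↦ sup_{t∈[0,T]} |X(ω,t)| is measurable. Then there exists a constant K, depending only on T and C, such that E( sup_{t∈[0,T]} X(t)² ) ≤ K · ( E(X₀²) + μ² + S² ). In particular E(sup_{t∈[0,T]} X(t)²) < ∞. -/
open MeasureTheory
open scoped ENNReal

/-! Pathwise, the random part `∑ᵢ √λᵢ βᵢ eᵢ(X)` of the drift is bounded by `C G` with
`G = ∑ᵢ √λᵢ |βᵢ|`, so `sup_{[0,T]} |X| ≤ |X₀| + |μ| T + T C G` and
`sup X² ≤ 3 (X₀² + μ² T² + T² C² G²)`. The weighted Cauchy–Schwarz inequality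
`G² ≤ (∑ᵢ √λᵢ) (∑ᵢ √λᵢ βᵢ²)` together with `E βᵢ² = 1` gives `E G² ≤ (∑ᵢ √λᵢ)²`; in particular
`G` is almost surely finite, which is what makes the series in the drift summable. -/

theorem ENNReal.tsum_mul_sq_le {ι : Type*} (a f : ι → ℝ≥0∞) :
    (∑' i, a i * f i) ^ 2 ≤ (∑' i, a i) * ∑' i, a i * f i ^ 2 := by
  -- Hölder with exponents `1/2, 1/2` for the counting measure, applied to `a` and `a * f ^ 2`.
  let _ : MeasurableSpace ι := ⊤
  have hsqrt : ∀ x : ℝ≥0∞, (x ^ (2⁻¹ : ℝ)) ^ 2 = x := fun x => by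
    rw [← ENNReal.rpow_natCast, ← ENNReal.rpow_mul]; norm_num
  have hterm : ∀ i, a i ^ (2⁻¹ : ℝ) * (a i * f i ^ 2) ^ (2⁻¹ : ℝ) = a i * f i := fun i => by
    rw [← ENNReal.mul_rpow_of_nonneg _ _ (by norm_num), ← mul_assoc, ← sq, ← mul_pow]
    exact ENNReal.pow_rpow_inv_natCast two_ne_zero _
  have hHolder := ENNReal.lintegral_mul_norm_pow_le (μ := Measure.count)
    (measurable_from_top (f := a)).aemeasurable
    (measurable_from_top (f := fun i => a i * f i ^ 2)).aemeasurable
    (by norm_num : (0 : ℝ) ≤ 2⁻¹) (by norm_num : (0 : ℝ) ≤ 2⁻¹) (by norm_num)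
  simp only [lintegral_count, hterm] at hHolder
  calc (∑' i, a i * f i) ^ 2
      ≤ ((∑' i, a i) ^ (2⁻¹ : ℝ) * (∑' i, a i * f i ^ 2) ^ (2⁻¹ : ℝ)) ^ 2 := by gcongr
    _ = (∑' i, a i) * ∑' i, a i * f i ^ 2 := by rw [mul_pow, hsqrt, hsqrt]

theorem lintegral_tsum_mul_sq_le {Ω ι : Type*} [MeasurableSpace Ω] [Countable ι]
    {P : Measure Ω} (a : ι → ℝ≥0∞) {f : ι → Ω → ℝ≥0∞} (hf : ∀ i, AEMeasurable (f i) P) :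
    ∫⁻ ω, (∑' i, a i * f i ω) ^ 2 ∂P ≤ (∑' i, a i) * ∑' i, a i * ∫⁻ ω, f i ω ^ 2 ∂P := by
  have hf2 : ∀ i, AEMeasurable (fun ω => a i * f i ω ^ 2) P :=
    fun i => ((hf i).pow_const 2).const_mul _
  calc ∫⁻ ω, (∑' i, a i * f i ω) ^ 2 ∂P
      ≤ ∫⁻ ω, (∑' i, a i) * ∑' i, a i * f i ω ^ 2 ∂P :=
        lintegral_mono fun ω => ENNReal.tsum_mul_sq_le a fun i => f i ω
    _ = (∑' i, a i) * ∑' i, ∫⁻ ω, a i * f i ω ^ 2 ∂P := by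
        rw [lintegral_const_mul'' _ (AEMeasurable.tsum hf2), lintegral_tsum hf2]
    _ = (∑' i, a i) * ∑' i, a i * ∫⁻ ω, f i ω ^ 2 ∂P := by
        simp_rw [lintegral_const_mul'' _ ((hf _).pow_const 2)]

theorem sq_iSup_abs_le_of_eq_add_integral {x f : ℝ → ℝ} {x₀ μ T M : ℝ} (hT : 0 ≤ T)
    (hf : ∀ s, |f s| ≤ M) (hx : ∀ t ∈ Set.Icc 0 T, x t = x₀ + μ * t + ∫ s in 0..t, f s) :
    (⨆ t : Set.Icc 0 T, |x t|) ^ 2 ≤ 3 * (x₀ ^ 2 + μ ^ 2 * T ^ 2 + T ^ 2 * M ^ 2) := by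
  have hM : 0 ≤ M := (abs_nonneg _).trans (hf 0)
  have hbound : ∀ t ∈ Set.Icc 0 T, |x t| ≤ |x₀| + |μ| * T + T * M := by
    rintro t ⟨ht0, htT⟩
    have hint : |∫ s in 0..t, f s| ≤ M * t := by
      simpa [abs_of_nonneg ht0] using
        intervalIntegral.norm_integral_le_of_norm_le_const (a := 0) (b := t) (f := f)
          fun s _ => hf s
    calc |x t| ≤ |x₀| + |μ| * t + M * t := by
          grw [hx t ⟨ht0, htT⟩, abs_add_le, abs_add_le, abs_mul, abs_of_nonneg ht0, hint]
      _ ≤ |x₀| + |μ| * T + T * M := by nlinarith [abs_nonneg μ]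
  have hsup : ⨆ t : Set.Icc 0 T, |x t| ≤ |x₀| + |μ| * T + T * M :=
    Real.iSup_le (fun t => hbound t t.2) (by positivity)
  have hsup0 : 0 ≤ ⨆ t : Set.Icc 0 T, |x t| := Real.iSup_nonneg fun t => abs_nonneg _
  nlinarith [sq_abs x₀, sq_abs μ, abs_nonneg x₀, abs_nonneg μ, mul_nonneg hT hM,
    sq_nonneg (|x₀| - |μ| * T), sq_nonneg (|x₀| - T * M), sq_nonneg (|μ| * T - T * M)]

theorem lintegral_sq_tsum_ofReal_mul_abs_le {Ω ι : Type*} [MeasurableSpace Ω] [Countable ι]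
    {P : Measure Ω} {a : ι → ℝ} (ha : ∀ i, 0 ≤ a i) (ha_sum : Summable a) {β : ι → Ω → ℝ}
    (hβm : ∀ i, AEMeasurable (β i) P) (hβi : ∀ i, Integrable (fun ω => β i ω ^ 2) P)
    (hβE : ∀ i, ∫ ω, β i ω ^ 2 ∂P = 1) :
    ∫⁻ ω, (∑' i, ENNReal.ofReal (a i * |β i ω|)) ^ 2 ∂P ≤ ENNReal.ofReal (∑' i, a i) ^ 2 := by
  have hmoment : ∀ i, ∫⁻ ω, ENNReal.ofReal |β i ω| ^ 2 ∂P = 1 := fun i => by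
    simp_rw [← ENNReal.ofReal_pow (abs_nonneg _), sq_abs]
    rw [← ofReal_integral_eq_lintegral_ofReal (hβi i) (ae_of_all _ fun _ => sq_nonneg _), hβE i,
      ENNReal.ofReal_one]
  simp_rw [ENNReal.ofReal_mul (ha _)]
  calc _ ≤ _ := lintegral_tsum_mul_sq_le _ fun i => (hβm i).abs.ennreal_ofReal
    _ = ENNReal.ofReal (∑' i, a i) ^ 2 := by
      simp only [hmoment, mul_one]
      rw [ENNReal.ofReal_tsum_of_nonneg ha ha_sum, sq]

theorem abs_tsum_mul_mul_le {ι : Type*} {a b c : ι → ℝ} {C : ℝ} (ha : ∀ i, 0 ≤ a i)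
    (hab : Summable fun i => a i * |b i|) (hc : ∀ i, |c i| ≤ C) :
    |∑' i, a i * b i * c i| ≤ (∑' i, a i * |b i|) * C :=
  (Real.norm_eq_abs _).symm.trans_le <|
    tsum_of_norm_bounded (hab.hasSum.mul_right C) fun i => by
      rw [Real.norm_eq_abs, abs_mul, abs_mul, abs_of_nonneg (ha i)]
      exact mul_le_mul_of_nonneg_left (hc i) (mul_nonneg (ha i) (abs_nonneg _))

theorem ENNReal.ofReal_add_add_mul_sq {a b c g : ℝ} (ha : 0 ≤ a) (hb : 0 ≤ b) (hc : 0 ≤ c)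
    (hg : 0 ≤ g) :
    ENNReal.ofReal (a + b + c * g ^ 2) =
      ENNReal.ofReal a + ENNReal.ofReal b + ENNReal.ofReal c * ENNReal.ofReal g ^ 2 := by
  rw [ENNReal.ofReal_add (by positivity) (by positivity), ENNReal.ofReal_add ha hb,
    ENNReal.ofReal_mul hc, ENNReal.ofReal_pow hg]

theorem ofReal_sq_iSup_abs_le_of_eq_add_integral_tsum {ι : Type*} {x : ℝ → ℝ} {x₀ μ T C : ℝ}
    {a b : ι → ℝ} {e : ι → ℝ → ℝ} (hT : 0 ≤ T) (ha : ∀ i, 0 ≤ a i) (he : ∀ i y, |e i y| ≤ C)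
    (hfin : ∑' i, ENNReal.ofReal (a i * |b i|) ≠ ⊤)
    (hx : ∀ t ∈ Set.Icc 0 T, x t = x₀ + μ * t + ∫ s in 0..t, ∑' i, a i * b i * e i (x s)) :
    ENNReal.ofReal ((⨆ t : Set.Icc 0 T, |x t|) ^ 2) ≤
      3 * (ENNReal.ofReal (x₀ ^ 2) + ENNReal.ofReal (μ ^ 2 * T ^ 2) +
        ENNReal.ofReal (T ^ 2 * C ^ 2) * (∑' i, ENNReal.ofReal (a i * |b i|)) ^ 2) := by
  have hnn : ∀ i, 0 ≤ a i * |b i| := fun i => mul_nonneg (ha i) (abs_nonneg _)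
  have hsummable : Summable fun i => a i * |b i| :=
    (ENNReal.summable_toReal hfin).congr fun i => ENNReal.toReal_ofReal (hnn i)
  have hsq := sq_iSup_abs_le_of_eq_add_integral hT
    (fun s => abs_tsum_mul_mul_le ha hsummable fun i => he i (x s)) hx
  calc _ ≤ ENNReal.ofReal (3 * (x₀ ^ 2 + μ ^ 2 * T ^ 2 + T ^ 2 * C ^ 2 *
        (∑' i, a i * |b i|) ^ 2)) :=
        ENNReal.ofReal_le_ofReal (hsq.trans_eq (by ring))
    _ = _ := by
      rw [ENNReal.ofReal_mul (p := 3) (by norm_num), ENNReal.ofReal_ofNat,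
        ENNReal.ofReal_add_add_mul_sq (by positivity) (by positivity) (by positivity)
          (tsum_nonneg hnn), ENNReal.ofReal_tsum_of_nonneg hnn hsummable]

theorem lintegral_ofReal_sq_add_add_mul_sq_le {Ω : Type*} [MeasurableSpace Ω] {P : Measure Ω}
    [IsProbabilityMeasure P] {Y : Ω → ℝ} {G : Ω → ℝ≥0∞} {b c g : ℝ}
    (hY : Integrable (fun ω => Y ω ^ 2) P) (hG : AEMeasurable G P) (hb : 0 ≤ b) (hc : 0 ≤ c)
    (hg : 0 ≤ g) (hG_sq : ∫⁻ ω, G ω ^ 2 ∂P ≤ ENNReal.ofReal g ^ 2) :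
    ∫⁻ ω, ENNReal.ofReal (Y ω ^ 2) + ENNReal.ofReal b + ENNReal.ofReal c * G ω ^ 2 ∂P ≤
      ENNReal.ofReal ((∫ ω, Y ω ^ 2 ∂P) + b + c * g ^ 2) := by
  rw [lintegral_add_right' _ ((hG.pow_const 2).const_mul _),
    lintegral_add_right _ measurable_const, lintegral_const_mul'' _ (hG.pow_const 2),
    lintegral_const, measure_univ, mul_one,
    ← ofReal_integral_eq_lintegral_ofReal hY (ae_of_all _ fun _ => sq_nonneg _),
    ENNReal.ofReal_add_add_mul_sq (integral_nonneg fun _ => sq_nonneg _) hb hc hg]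
  gcongr

theorem stmt13_general (T C : ℝ) (hT : 0 < T) :
    ∃ K : ℝ, 0 < K ∧
      ∀ (Ω : Type) (_ : MeasurableSpace Ω) (P : Measure Ω), IsProbabilityMeasure P →
      ∀ (μ : ℝ) (l : ℕ → ℝ), (∀ i, 0 ≤ l i) →
        (Summable fun i => Real.sqrt (l i)) →
      ∀ (e : ℕ → ℝ → ℝ), (∀ i x, |e i x| ≤ C) →
      ∀ (β : ℕ → Ω → ℝ), (∀ i, Measurable (β i)) →
        (∀ i, Integrable (fun ω => (β i ω) ^ 2) P) →
        (∀ i, ∫ ω, (β i ω) ^ 2 ∂P = 1) →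
      ∀ (X₀ : Ω → ℝ), Measurable X₀ → Integrable (fun ω => (X₀ ω) ^ 2) P →
      ∀ (X : Ω → ℝ → ℝ),
        (∀ᵐ ω ∂P, ContinuousOn (X ω) (Set.Icc 0 T)) →
        (∀ᵐ ω ∂P, ∀ t ∈ Set.Icc (0 : ℝ) T,
          (∀ᵐ s ∂(volume.restrict (Set.Icc (0 : ℝ) t)),
            Summable fun i => |Real.sqrt (l i) * β i ω * e i (X ω s)|) ∧
          X ω t = X₀ ω + μ * t +
            ∫ s in (0 : ℝ)..t, ∑' i, Real.sqrt (l i) * β i ω * e i (X ω s)) →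
        Measurable (fun ω => ⨆ t : Set.Icc (0 : ℝ) T, |X ω t|) →
        ∫⁻ ω, ENNReal.ofReal ((⨆ t : Set.Icc (0 : ℝ) T, |X ω t|) ^ 2) ∂P ≤
          ENNReal.ofReal
            (K * ((∫ ω, (X₀ ω) ^ 2 ∂P) + μ ^ 2 + (∑' i, Real.sqrt (l i)) ^ 2)) := by
  refine ⟨3 * (1 + T ^ 2) * (1 + C ^ 2), by positivity, ?_⟩
  intro Ω _ P _ μ l _ hsum e he β hβm hβi hβE X₀ _ hX₀i X _ hX _
  set S := ∑' i, √(l i)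
  set G : Ω → ℝ≥0∞ := fun ω => ∑' i, ENNReal.ofReal (√(l i) * |β i ω|)
  have hG : AEMeasurable G P :=
    AEMeasurable.tsum fun i => ((hβm i).abs.const_mul _).ennreal_ofReal.aemeasurable
  have hG_sq : ∫⁻ ω, G ω ^ 2 ∂P ≤ ENNReal.ofReal S ^ 2 :=
    lintegral_sq_tsum_ofReal_mul_abs_le (fun i => Real.sqrt_nonneg _) hsum
      (fun i => (hβm i).aemeasurable) hβi hβE
  calc ∫⁻ ω, ENNReal.ofReal ((⨆ t : Set.Icc (0 : ℝ) T, |X ω t|) ^ 2) ∂P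
      ≤ ∫⁻ ω, 3 * (ENNReal.ofReal (X₀ ω ^ 2) + ENNReal.ofReal (μ ^ 2 * T ^ 2) +
        ENNReal.ofReal (T ^ 2 * C ^ 2) * G ω ^ 2) ∂P := lintegral_mono_ae <| by
        filter_upwards [hX, ae_lt_top' (hG.pow_const 2) (hG_sq.trans_lt (by simp)).ne]
          with ω hXω hGω
        exact ofReal_sq_iSup_abs_le_of_eq_add_integral_tsum hT.le (fun i => Real.sqrt_nonneg _) he
          ((ENNReal.pow_lt_top_iff.mp hGω).resolve_right two_ne_zero).ne fun t ht => (hXω t ht).2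
    _ = 3 * ∫⁻ ω, ENNReal.ofReal (X₀ ω ^ 2) + ENNReal.ofReal (μ ^ 2 * T ^ 2) +
        ENNReal.ofReal (T ^ 2 * C ^ 2) * G ω ^ 2 ∂P := lintegral_const_mul' _ _ ENNReal.ofNat_ne_top
    _ ≤ 3 * ENNReal.ofReal ((∫ ω, X₀ ω ^ 2 ∂P) + μ ^ 2 * T ^ 2 + T ^ 2 * C ^ 2 * S ^ 2) := by
      gcongr
      exact lintegral_ofReal_sq_add_add_mul_sq_le hX₀i hG (by positivity) (by positivity)
        (tsum_nonneg fun i => Real.sqrt_nonneg _) hG_sq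
    _ ≤ _ := by
      have hE : 0 ≤ ∫ ω, X₀ ω ^ 2 ∂P := integral_nonneg fun _ => sq_nonneg _
      rw [← ENNReal.ofReal_ofNat, ← ENNReal.ofReal_mul (by norm_num)]
      exact ENNReal.ofReal_le_ofReal (by
        nlinarith [sq_nonneg T, sq_nonneg C, sq_nonneg μ, sq_nonneg S,
          mul_nonneg (sq_nonneg T) (sq_nonneg C)])

/-- Lemma of Section 3: the characteristic curves
`X(t) = X₀ + μt + ∫₀ᵗ Σᵢ √λᵢ βᵢ eᵢ(X(s)) ds` of the space-dependent advection
equation with Karhunen–Loève coefficient belong to `L²(Ω; C([0,T]; ℝ))`: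
there is a constant `K`, depending only on `T` and `C`, with
`E(sup_{t∈[0,T]} X(t)²) ≤ K (E(X₀²) + μ² + (Σᵢ √λᵢ)²) < ∞`. -/
theorem stmt13 (T C : ℝ) (hT : 0 < T) (hC : 0 ≤ C) :
    ∃ K : ℝ, 0 < K ∧
      ∀ (Ω : Type) (_ : MeasurableSpace Ω) (P : Measure Ω), IsProbabilityMeasure P →
      ∀ (μ : ℝ) (l : ℕ → ℝ), (∀ i, 0 ≤ l i) →
        (Summable fun i => Real.sqrt (l i)) →
      ∀ (e : ℕ → ℝ → ℝ), (∀ i x, |e i x| ≤ C) →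
      ∀ (β : ℕ → Ω → ℝ), (∀ i, Measurable (β i)) →
        (∀ i, Integrable (fun ω => (β i ω) ^ 2) P) →
        (∀ i, ∫ ω, (β i ω) ^ 2 ∂P = 1) →
      ∀ (X₀ : Ω → ℝ), Measurable X₀ → Integrable (fun ω => (X₀ ω) ^ 2) P →
      ∀ (X : Ω → ℝ → ℝ),
        (∀ᵐ ω ∂P, ContinuousOn (X ω) (Set.Icc 0 T)) →
        (∀ᵐ ω ∂P, ∀ t ∈ Set.Icc (0 : ℝ) T,
          (∀ᵐ s ∂(volume.restrict (Set.Icc (0 : ℝ) t)),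
            Summable fun i => |Real.sqrt (l i) * β i ω * e i (X ω s)|) ∧
          X ω t = X₀ ω + μ * t +
            ∫ s in (0 : ℝ)..t, ∑' i, Real.sqrt (l i) * β i ω * e i (X ω s)) →
        Measurable (fun ω => ⨆ t : Set.Icc (0 : ℝ) T, |X ω t|) →
        ∫⁻ ω, ENNReal.ofReal ((⨆ t : Set.Icc (0 : ℝ) T, |X ω t|) ^ 2) ∂P ≤
          ENNReal.ofReal
            (K * ((∫ ω, (X₀ ω) ^ 2 ∂P) + μ ^ 2 + (∑' i, Real.sqrt (l i)) ^ 2)) :=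
  stmt13_general T C hT
end
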